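/- Under the same hypotheses as the decoupled upper bound, trace(A ρ(t)) ≥ Σ_{n=1}^{N_1} w_n^{(1)} λ_{N_1−n+1}^{(1)} + Σ_{n=1}^{N_2} w_n^{(2)} λ_{N_2−n+1}^{(2)}. -/
import Mathlib


open Matrix Finset
open scoped ComplexOrder

lemma perm_bound {N : ℕ} (a b : Fin N → ℝ) (ha : Antitone a) (hb : Antitone b)
    (σ : Equiv.Perm (Fin N)) :
    ∑ j, a j * b (Fin.rev j) ≤ ∑ j, a j * b (σ j) := by
  have hanti : Antivary a (fun j => b (Fin.rev j)) := by
    intro i j hij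
    by_contra h
    push_neg at h
    have hji : j ≤ i := le_of_lt (by
      by_contra h'
      exact absurd (ha (le_of_not_gt h')) (not_le_of_gt h))
    have : Fin.rev i ≤ Fin.rev j := Fin.rev_le_rev.mpr hji
    exact absurd (hb this) (not_le_of_gt hij)
  have := hanti.sum_mul_le_sum_mul_comp_perm (σ := σ.trans (Fin.revPerm))
  simpa [Fin.rev_rev] using this

set_option maxHeartbeats 1000000 in
lemma ds_bound {N : ℕ} (a b : Fin N → ℝ) (ha : Antitone a) (hb : Antitone b)
    (M : Matrix (Fin N) (Fin N) ℝ) (hM : M ∈ doublyStochastic ℝ (Fin N)) :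
    ∑ j, a j * b (Fin.rev j) ≤ ∑ j, ∑ k, M j k * (a j * b k) := by
  obtain ⟨w, hw0, hw1, hMeq⟩ := exists_eq_sum_perm_of_mem_doublyStochastic hM
  have hrhs : ∑ j, ∑ k, M j k * (a j * b k)
      = ∑ σ : Equiv.Perm (Fin N), w σ * ∑ j, a j * b (σ j) := by
    have hent : ∀ j k, M j k = ∑ σ : Equiv.Perm (Fin N), w σ * (if σ j = k then 1 else 0) := by
      intro j k
      rw [← hMeq]
      simp [Matrix.sum_apply, PEquiv.toMatrix_apply, Equiv.toPEquiv_apply, eq_comm]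
    simp only [hent, Finset.sum_mul, mul_ite, mul_one, mul_zero, ite_mul, zero_mul]
    calc ∑ j, ∑ k, ∑ σ : Equiv.Perm (Fin N), (if σ j = k then w σ * (a j * b k) else 0)
        = ∑ j, ∑ σ : Equiv.Perm (Fin N), ∑ k, (if σ j = k then w σ * (a j * b k) else 0) :=
          Finset.sum_congr rfl fun j _ => Finset.sum_comm
      _ = ∑ j, ∑ σ : Equiv.Perm (Fin N), w σ * (a j * b (σ j)) := by
          refine Finset.sum_congr rfl fun j _ => Finset.sum_congr rfl fun σ _ => ?_
          simp
      _ = ∑ σ : Equiv.Perm (Fin N), ∑ j, w σ * (a j * b (σ j)) := Finset.sum_comm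
      _ = ∑ σ : Equiv.Perm (Fin N), w σ * ∑ j, a j * b (σ j) := by
          simp [Finset.mul_sum]
  rw [hrhs]
  calc ∑ j, a j * b (Fin.rev j)
      = ∑ σ : Equiv.Perm (Fin N), w σ * ∑ j, a j * b (Fin.rev j) := by
        rw [← Finset.sum_mul, hw1, one_mul]
    _ ≤ ∑ σ : Equiv.Perm (Fin N), w σ * ∑ j, a j * b (σ j) :=
        Finset.sum_le_sum fun σ _ =>
          mul_le_mul_of_nonneg_left (perm_bound a b ha hb σ) (hw0 σ)

lemma normSq_ds {N : ℕ} (M : Matrix (Fin N) (Fin N) ℂ)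
    (hM : M ∈ Matrix.unitaryGroup (Fin N) ℂ) :
    Matrix.of (fun j k => Complex.normSq (M j k)) ∈ doublyStochastic ℝ (Fin N) := by
  rw [mem_doublyStochastic_iff_sum]
  have h1 : M * Mᴴ = 1 := by
    rw [← Matrix.star_eq_conjTranspose]
    exact (Matrix.mem_unitaryGroup_iff).mp hM
  have h2 : Mᴴ * M = 1 := by
    rw [← Matrix.star_eq_conjTranspose]
    exact (Matrix.mem_unitaryGroup_iff').mp hM
  refine ⟨fun i j => Complex.normSq_nonneg _, fun i => ?_, fun j => ?_⟩
  · have := congrArg (fun X => X i i) h1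
    simp only [Matrix.mul_apply, Matrix.conjTranspose_apply, Matrix.one_apply_eq] at this
    have : (∑ k, (Complex.normSq (M i k) : ℂ)) = 1 := by
      rw [← this]
      exact Finset.sum_congr rfl fun k _ => by
        rw [Complex.star_def, Complex.mul_conj]
    simp only [Matrix.of_apply]
    exact_mod_cast this
  · have := congrArg (fun X => X j j) h2
    simp only [Matrix.mul_apply, Matrix.conjTranspose_apply, Matrix.one_apply_eq] at this
    have : (∑ k, (Complex.normSq (M k j) : ℂ)) = 1 := by
      rw [← this]
      exact Finset.sum_congr rfl fun k _ => by
        rw [Complex.star_def, mul_comm, Complex.mul_conj]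
    simp only [Matrix.of_apply]
    exact_mod_cast this

set_option maxHeartbeats 1000000 in
lemma block_bound {N : ℕ} (w lam : Fin N → ℝ) (hw : Antitone w) (hlam : Antitone lam)
    (W V U : Matrix (Fin N) (Fin N) ℂ) (hW : W ∈ Matrix.unitaryGroup (Fin N) ℂ)
    (hV : V ∈ Matrix.unitaryGroup (Fin N) ℂ) (hU : U ∈ Matrix.unitaryGroup (Fin N) ℂ) :
    ((∑ n, w n * lam (Fin.rev n) : ℝ) : ℂ) ≤
      ((V * Matrix.diagonal (fun k => (lam k : ℂ)) * Vᴴ) *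
        (U * (W * Matrix.diagonal (fun k => (w k : ℂ)) * Wᴴ) * Uᴴ)).trace := by
  set M : Matrix (Fin N) (Fin N) ℂ := Vᴴ * (U * W) with hMdef
  have hMu : M ∈ Matrix.unitaryGroup (Fin N) ℂ :=
    mul_mem (Unitary.star_mem hV) (mul_mem hU hW)
  have hVV : V * Vᴴ = 1 := by
    rw [← Matrix.star_eq_conjTranspose]; exact (Matrix.mem_unitaryGroup_iff).mp hV
  have hVV' : Vᴴ * V = 1 := by
    rw [← Matrix.star_eq_conjTranspose]; exact (Matrix.mem_unitaryGroup_iff').mp hV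
  have key : (V * Matrix.diagonal (fun k => (lam k : ℂ)) * Vᴴ) *
        (U * (W * Matrix.diagonal (fun k => (w k : ℂ)) * Wᴴ) * Uᴴ)
      = V * (Matrix.diagonal (fun k => (lam k : ℂ)) * (M * Matrix.diagonal (fun k => (w k : ℂ)) * Mᴴ)) * Vᴴ := by
    simp only [hMdef, Matrix.conjTranspose_mul, Matrix.conjTranspose_conjTranspose,
      Matrix.mul_assoc]
    rw [hVV, Matrix.mul_one]
  rw [key]
  have htr : (V * (Matrix.diagonal (fun k => (lam k : ℂ)) * (M * Matrix.diagonal (fun k => (w k : ℂ)) * Mᴴ)) * Vᴴ).trace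
      = (Matrix.diagonal (fun k => (lam k : ℂ)) * (M * Matrix.diagonal (fun k => (w k : ℂ)) * Mᴴ)).trace := by
    rw [Matrix.trace_mul_cycle, ← Matrix.mul_assoc, hVV', Matrix.one_mul]
  rw [htr]
  have hent : (Matrix.diagonal (fun k => (lam k : ℂ)) * (M * Matrix.diagonal (fun k => (w k : ℂ)) * Mᴴ)).trace
      = ((∑ j, ∑ k, Complex.normSq (M j k) * (lam j * w k) : ℝ) : ℂ) := by
    rw [Matrix.trace]
    push_cast
    refine Finset.sum_congr rfl fun j _ => ?_
    rw [Matrix.diag_apply, Matrix.diagonal_mul, Matrix.mul_apply]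
    rw [Finset.mul_sum]
    refine Finset.sum_congr rfl fun k _ => ?_
    rw [Matrix.mul_diagonal, Matrix.conjTranspose_apply]
    rw [Complex.star_def]
    have : M j k * (w k : ℂ) * (starRingEnd ℂ) (M j k)
        = (w k : ℂ) * (M j k * (starRingEnd ℂ) (M j k)) := by ring
    rw [this, Complex.mul_conj]
    push_cast
    ring
  rw [hent]
  rw [Complex.real_le_real]
  have := ds_bound lam w hlam hw (Matrix.of (fun j k => Complex.normSq (M j k))) (normSq_ds M hMu)
  simp only [Matrix.of_apply] at this
  calc ∑ n, w n * lam (Fin.rev n) = ∑ j, lam j * w (Fin.rev j) := by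
        rw [← Equiv.sum_comp (Fin.revPerm) (fun j => lam j * w (Fin.rev j))]
        simp [Fin.rev_rev, mul_comm]
    _ ≤ ∑ j, ∑ k, Complex.normSq (M j k) * (lam j * w k) := this

lemma trace_fromBlocks' {n m : ℕ} (A : Matrix (Fin n) (Fin n) ℂ) (B : Matrix (Fin n) (Fin m) ℂ)
    (C : Matrix (Fin m) (Fin n) ℂ) (D : Matrix (Fin m) (Fin m) ℂ) :
    (Matrix.fromBlocks A B C D).trace = A.trace + D.trace := by
  simp [Matrix.trace, Fintype.sum_sum_type, Matrix.fromBlocks]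

theorem decoupled_lower_bound' {N1 N2 : ℕ}
    (A : Matrix (Fin N1 ⊕ Fin N2) (Fin N1 ⊕ Fin N2) ℂ)
    (ρ1 : Matrix (Fin N1) (Fin N1) ℂ) (ρ2 : Matrix (Fin N2) (Fin N2) ℂ)
    (w1 lam1 : Fin N1 → ℝ) (w2 lam2 : Fin N2 → ℝ)
    (hw1 : Antitone w1) (hw2 : Antitone w2)
    (hlam1 : Antitone lam1) (hlam2 : Antitone lam2)
    (W1 : Matrix (Fin N1) (Fin N1) ℂ) (hW1 : W1 ∈ Matrix.unitaryGroup (Fin N1) ℂ)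
    (hρ1eig : ρ1 = W1 * Matrix.diagonal (fun k => (w1 k : ℂ)) * W1ᴴ)
    (W2 : Matrix (Fin N2) (Fin N2) ℂ) (hW2 : W2 ∈ Matrix.unitaryGroup (Fin N2) ℂ)
    (hρ2eig : ρ2 = W2 * Matrix.diagonal (fun k => (w2 k : ℂ)) * W2ᴴ)
    (V1 : Matrix (Fin N1) (Fin N1) ℂ) (hV1 : V1 ∈ Matrix.unitaryGroup (Fin N1) ℂ)
    (hA1eig : A.toBlocks₁₁ = V1 * Matrix.diagonal (fun k => (lam1 k : ℂ)) * V1ᴴ)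
    (V2 : Matrix (Fin N2) (Fin N2) ℂ) (hV2 : V2 ∈ Matrix.unitaryGroup (Fin N2) ℂ)
    (hA2eig : A.toBlocks₂₂ = V2 * Matrix.diagonal (fun k => (lam2 k : ℂ)) * V2ᴴ)
    (U1 : Matrix (Fin N1) (Fin N1) ℂ) (hU1 : U1 ∈ Matrix.unitaryGroup (Fin N1) ℂ)
    (U2 : Matrix (Fin N2) (Fin N2) ℂ) (hU2 : U2 ∈ Matrix.unitaryGroup (Fin N2) ℂ) :
    ((∑ n, w1 n * lam1 n.rev + ∑ n, w2 n * lam2 n.rev : ℝ) : ℂ) ≤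
      (A * (Matrix.fromBlocks U1 0 0 U2 * Matrix.fromBlocks ρ1 0 0 ρ2 *
        (Matrix.fromBlocks U1 0 0 U2)ᴴ)).trace := by
  have hblk : Matrix.fromBlocks U1 0 0 U2 * Matrix.fromBlocks ρ1 0 0 ρ2 *
        (Matrix.fromBlocks U1 0 0 U2)ᴴ
      = Matrix.fromBlocks (U1 * ρ1 * U1ᴴ) 0 0 (U2 * ρ2 * U2ᴴ) := by
    rw [Matrix.fromBlocks_conjTranspose, Matrix.fromBlocks_multiply, Matrix.fromBlocks_multiply]
    simp
  rw [hblk]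
  have hA' : A = Matrix.fromBlocks A.toBlocks₁₁ A.toBlocks₁₂ A.toBlocks₂₁ A.toBlocks₂₂ :=
    (Matrix.fromBlocks_toBlocks A).symm
  rw [hA', Matrix.fromBlocks_multiply, trace_fromBlocks']
  simp only [Matrix.mul_zero, zero_add, add_zero]
  have h1 := block_bound w1 lam1 hw1 hlam1 W1 V1 U1 hW1 hV1 hU1
  have h2 := block_bound w2 lam2 hw2 hlam2 W2 V2 U2 hW2 hV2 hU2
  have e1 : A.toBlocks₁₁ * (U1 * ρ1 * U1ᴴ)
      = (V1 * Matrix.diagonal (fun k => (lam1 k : ℂ)) * V1ᴴ) *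
        (U1 * (W1 * Matrix.diagonal (fun k => (w1 k : ℂ)) * W1ᴴ) * U1ᴴ) := by
    rw [hA1eig, hρ1eig]
  have e2 : A.toBlocks₂₂ * (U2 * ρ2 * U2ᴴ)
      = (V2 * Matrix.diagonal (fun k => (lam2 k : ℂ)) * V2ᴴ) *
        (U2 * (W2 * Matrix.diagonal (fun k => (w2 k : ℂ)) * W2ᴴ) * U2ᴴ) := by
    rw [hA2eig, hρ2eig]
  rw [e1, e2, Complex.ofReal_add]
  exact add_le_add h1 h2

/-- Improved kinematical lower bound for decoupled systems: if the initial state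
and the evolution are block-diagonal w.r.t. `ℂ^N = ℂ^{N₁} ⊕ ℂ^{N₂}`, then the
expectation value of `A` is bounded by the sum of the subspace bounds. -/
theorem decoupled_lower_bound {N1 N2 : ℕ}
    (A : Matrix (Fin N1 ⊕ Fin N2) (Fin N1 ⊕ Fin N2) ℂ) (hA : A.IsHermitian)
    (ρ1 : Matrix (Fin N1) (Fin N1) ℂ) (ρ2 : Matrix (Fin N2) (Fin N2) ℂ)
    (hρ : (Matrix.fromBlocks ρ1 0 0 ρ2).PosSemidef)
    (hρtr : (Matrix.fromBlocks ρ1 0 0 ρ2).trace = 1)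
    (w1 lam1 : Fin N1 → ℝ) (w2 lam2 : Fin N2 → ℝ)
    (hw1 : Antitone w1) (hw2 : Antitone w2)
    (hlam1 : Antitone lam1) (hlam2 : Antitone lam2)
    -- eigenvalue decompositions of ρ₁, ρ₂ and of the restricted observables A₁, A₂
    (W1 : Matrix (Fin N1) (Fin N1) ℂ) (hW1 : W1 ∈ Matrix.unitaryGroup (Fin N1) ℂ)
    (hρ1eig : ρ1 = W1 * Matrix.diagonal (fun k => (w1 k : ℂ)) * W1ᴴ)
    (W2 : Matrix (Fin N2) (Fin N2) ℂ) (hW2 : W2 ∈ Matrix.unitaryGroup (Fin N2) ℂ)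
    (hρ2eig : ρ2 = W2 * Matrix.diagonal (fun k => (w2 k : ℂ)) * W2ᴴ)
    (V1 : Matrix (Fin N1) (Fin N1) ℂ) (hV1 : V1 ∈ Matrix.unitaryGroup (Fin N1) ℂ)
    (hA1eig : A.toBlocks₁₁ = V1 * Matrix.diagonal (fun k => (lam1 k : ℂ)) * V1ᴴ)
    (V2 : Matrix (Fin N2) (Fin N2) ℂ) (hV2 : V2 ∈ Matrix.unitaryGroup (Fin N2) ℂ)
    (hA2eig : A.toBlocks₂₂ = V2 * Matrix.diagonal (fun k => (lam2 k : ℂ)) * V2ᴴ)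
    -- block-diagonal unitary evolution
    (U1 : Matrix (Fin N1) (Fin N1) ℂ) (hU1 : U1 ∈ Matrix.unitaryGroup (Fin N1) ℂ)
    (U2 : Matrix (Fin N2) (Fin N2) ℂ) (hU2 : U2 ∈ Matrix.unitaryGroup (Fin N2) ℂ) :
    ((∑ n, w1 n * lam1 n.rev + ∑ n, w2 n * lam2 n.rev : ℝ) : ℂ) ≤
      (A * (Matrix.fromBlocks U1 0 0 U2 * Matrix.fromBlocks ρ1 0 0 ρ2 *
        (Matrix.fromBlocks U1 0 0 U2)ᴴ)).trace := by
  
    exact decoupled_lower_bound' A ρ1 ρ2 w1 lam1 w2 lam2 hw1 hw2 hlam1 hlam2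
      W1 hW1 hρ1eig W2 hW2 hρ2eig V1 hV1 hA1eig V2 hV2 hA2eig U1 hU1 U2 hU2
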